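/- arXiv:2004.03770 — 2 statements merged into one kernel-verified Lean document; each statement's English description precedes it below -/
import Mathlib

section
/- Let $F$ be a field of characteristic $p > 0$ and let $G \subseteq F$ be a finite subgroup of the additive group of $F$. Then the polynomial $a(X) = \prod_{\sigma \in G}(X - \sigma) \in F[X]$ is additive, i.e., $a(X + Y) = a(X) + a(Y)$ as polynomials in $F[X, Y]$. -/
/-!
For `y ∈ G`, translation by `y` permutes `G`, so `a(X + y) = a(X)`. Viewed as a polynomial in `Y`
over the domain `F[X]`, `a(X + Y) - a(X) - a(Y)` therefore vanishes at the `|G|` points of `G`,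
while its degree is below `|G|`: `a(X + Y)` and `a(Y)` are both monic of degree `|G|` in `Y`.
-/

open Polynomial

/-- A univariate polynomial `a` is *additive* if `a(X + Y) = a(X) + a(Y)`
as polynomials in two variables. -/
def Polynomial.IsAdditive {F : Type*} [CommRing F] (a : Polynomial F) : Prop :=
  Polynomial.aeval (MvPolynomial.X 0 + MvPolynomial.X 1 : MvPolynomial (Fin 2) F) a =
    Polynomial.aeval (MvPolynomial.X 0 : MvPolynomial (Fin 2) F) a +
      Polynomial.aeval (MvPolynomial.X 1 : MvPolynomial (Fin 2) F) a

open Finset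

theorem AddSubgroup.prod_toFinset_sub_right {A M : Type*} [AddGroup A] [CommMonoid M]
    {G : AddSubgroup A} (hG : (G : Set A).Finite) (f : A → M) {y : A} (hy : y ∈ G) :
    ∏ σ ∈ hG.toFinset, f (σ - y) = ∏ σ ∈ hG.toFinset, f σ :=
  prod_nbij' (· - y) (· + y)
    (fun σ hσ => by simpa using G.sub_mem (by simpa using hσ) hy)
    (fun σ hσ => by simpa using G.add_mem (by simpa using hσ) hy)
    (fun σ _ => sub_add_cancel σ y) (fun σ _ => add_sub_cancel_right σ y) (fun _ _ => rfl)

theorem Lagrange.degree_nodal_sub_nodal_lt {R ι : Type*} [CommRing R] [Nontrivial R]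
    (s : Finset ι) (v w : ι → R) : (nodal s v - nodal s w).degree < #s := by
  simpa only [degree_nodal] using degree_sub_lt_left (p := nodal s v) (q := nodal s w)
    (by simp only [degree_nodal]) nodal_ne_zero
    (by rw [nodal_monic.leadingCoeff, nodal_monic.leadingCoeff])

namespace Polynomial

variable {R : Type*} [CommRing R]

/-- In `R[X][X]`, `C X` plays the role of `X` and the outer variable that of `Y`. -/
theorem isAdditive_of_aeval_C_X_add_X {a : R[X]}
    (h : aeval (C X + X : R[X][X]) a = C a + a.map C) : a.IsAdditive := by
  have hmap : a.map C = aeval (X : R[X][X]) a := rfl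
  let φ : R[X][X] →ₐ[R] MvPolynomial (Fin 2) R :=
    aevalTower (aeval (MvPolynomial.X 0)) (MvPolynomial.X 1)
  have hφ := congrArg φ h
  rw [hmap, map_add, ← aeval_algHom_apply, ← aeval_algHom_apply] at hφ
  simpa [φ, IsAdditive] using hφ

end Polynomial

namespace AddSubgroup

variable {R : Type*} [CommRing R] [IsDomain R]

theorem aeval_C_X_add_X_prod_X_sub_C {G : AddSubgroup R} (hG : (G : Set R).Finite) :
    aeval (C X + X : R[X][X]) (∏ σ ∈ hG.toFinset, (X - C σ)) =
      C (∏ σ ∈ hG.toFinset, (X - C σ)) + (∏ σ ∈ hG.toFinset, (X - C σ)).map C := by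
  set s := hG.toFinset
  set a := ∏ σ ∈ s, (X - C σ)
  have h_add : aeval (C X + X : R[X][X]) a = Lagrange.nodal s (fun σ => C σ - X) := by
    simp only [a, Lagrange.nodal_eq, map_prod, map_sub, aeval_X, aeval_C,
      Polynomial.algebraMap_apply, algebraMap_eq]
    exact prod_congr rfl fun _ _ => by ring
  have h_map : a.map C = Lagrange.nodal s C := by
    simp [a, Lagrange.nodal_eq, Polynomial.map_prod]
  have h_card : 0 < #s := card_pos.2 ⟨0, by simp [s]⟩
  rw [h_add, h_map]
  refine eq_of_degree_sub_lt_of_eval_index_eq s C_injective.injOn ?_ fun y hy => ?_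
  · rw [sub_add_eq_sub_sub_swap]
    exact (degree_sub_le _ _).trans_lt <| max_lt (Lagrange.degree_nodal_sub_nodal_lt s _ _)
      (degree_C_le.trans_lt (by exact_mod_cast h_card))
  · simp only [eval_add, eval_C, Lagrange.eval_nodal, Lagrange.eval_nodal_at_node hy, add_zero]
    exact (prod_congr rfl fun σ _ => by rw [C_sub]; ring).trans
      (prod_toFinset_sub_right hG (fun σ => X - C σ) (hG.mem_toFinset.1 hy))

theorem isAdditive_prod_X_sub_C {G : AddSubgroup R} (hG : (G : Set R).Finite) :
    (∏ σ ∈ hG.toFinset, (X - C σ)).IsAdditive :=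
  isAdditive_of_aeval_C_X_add_X (aeval_C_X_add_X_prod_X_sub_C hG)

end AddSubgroup

theorem additive_of_prod_roots_finite_addSubgroup_general
    (F : Type*) [Field F]
    (G : AddSubgroup F) (hG : (G : Set F).Finite) :
    (∏ σ ∈ hG.toFinset, (X - C σ)).IsAdditive :=
  AddSubgroup.isAdditive_prod_X_sub_C hG

theorem additive_of_prod_roots_finite_addSubgroup
    (F : Type*) [Field F] (p : ℕ) (hp : 0 < p) [CharP F p]
    (G : AddSubgroup F) (hG : (G : Set F).Finite) :
    (∏ σ ∈ hG.toFinset, (X - C σ)).IsAdditive :=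
  additive_of_prod_roots_finite_addSubgroup_general F G hG
end

section
/- Let $L/K$ be a finite totally ramified Galois extension of complete discretely valued fields with Galois group $G$, residue field $E$ of characteristic $p > 0$, and uniformizer $\alpha$ of $L$. Let $i \geq 1$ be an integer with $G_i \neq 1$ and $G_{i+1} = 1$. Then the map $\theta_i : G_i \to U_L^i / U_L^{i+1}$ sending $\sigma \mapsto \sigma(\alpha)/\alpha \bmod U_L^{i+1}$ is an injective group homomorphism independent of the choice of uniformizer $\alpha$. -/
/-- A (normalized, surjective) discrete valuation on a field `K`, written additively
with values in `ℤ ∪ {∞}`. -/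
structure DValuation (K : Type*) [Field K] where
  v : K → WithTop ℤ
  surj : Function.Surjective v
  eq_top_iff : ∀ x, v x = ⊤ ↔ x = 0
  map_one : v 1 = 0
  map_mul : ∀ x y, v (x * y) = v x + v y
  map_neg : ∀ x, v (-x) = v x
  add_ge : ∀ x y, min (v x) (v y) ≤ v (x + y)

namespace DValuation

variable {K : Type*} [Field K] (w : DValuation K)

/-- The valuation ring `𝒪_K = {x | v x ≥ 0}` of a discrete valuation. -/
def integers : Subring K where
  carrier := {x | 0 ≤ w.v x}
  zero_mem' := by simp [(w.eq_top_iff 0).2 rfl]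
  one_mem' := by simp [w.map_one]
  add_mem' := fun {a b} ha hb => le_trans (le_min ha hb) (w.add_ge a b)
  mul_mem' := fun {a b} ha hb => by
    simpa [w.map_mul] using add_nonneg ha hb
  neg_mem' := fun {a} ha => by simpa [w.map_neg] using ha

/-- The maximal ideal `𝔪_K = {x | v x > 0}` of the valuation ring. -/
def maxIdeal : Ideal w.integers where
  carrier := {x | 0 < w.v x.1}
  zero_mem' := by simp [(w.eq_top_iff 0).2 rfl]
  add_mem' := fun {a b} ha hb => lt_of_lt_of_le (lt_min ha hb) (w.add_ge a.1 b.1)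
  smul_mem' := fun r x hx => by
    have : w.v x.1 ≤ w.v r.1 + w.v x.1 := le_add_of_nonneg_left r.2
    simpa [w.map_mul] using lt_of_lt_of_le hx this

/-- Completeness of a field with respect to a discrete valuation, phrased via
Cauchy sequences. -/
def IsComplete : Prop :=
  ∀ a : ℕ → K,
    (∀ N : ℤ, ∃ M : ℕ, ∀ m ≥ M, ∀ n ≥ M, (N : WithTop ℤ) ≤ w.v (a m - a n)) →
    ∃ x : K, ∀ N : ℤ, ∃ M : ℕ, ∀ m ≥ M, (N : WithTop ℤ) ≤ w.v (a m - x)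

end DValuation

/-- The `i`-th lower-numbering ramification "set":
automorphisms acting trivially on `𝒪_L / 𝔪_L^{i+1}`. -/
def gset (K : Type*) {L : Type*} [Field K] [Field L] [Algebra K L]
    (vL : DValuation L) (i : ℕ) : Set (L ≃ₐ[K] L) :=
  {σ | ∀ x : L, 0 ≤ vL.v x → (((i : ℤ) + 1 : ℤ) : WithTop ℤ) ≤ vL.v (σ x - x)}

/-! The valuation of `a • α ^ k` with `a ∈ K` is `k` modulo `[L : K]`, so in a sum
`∑_{k < [L:K]} a_k • α ^ k` no two nonzero terms have the same valuation and the valuation of the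
sum is the least valuation of a term. Hence `1, α, …, α ^ ([L:K] - 1)` is a basis of `L/K` in which
the integers of `L` have integral coordinates, and `σ x - x` is divisible by `σ α - α` for every
integer `x`: the group `G_j` consists of the `σ` with `v (σ α - α) ≥ j + 1`. Writing `τ α = u α`,
resp. `α' = u α`, with a unit `u`, the homomorphism and independence congruences become
`v (σ u - u) ≥ i + 1`, and injectivity becomes `G_{i+1} = 1`. -/

namespace DValuation

variable {K : Type*} [Field K] (w : DValuation K)

def toAddValuation : AddValuation K (WithTop ℤ) :=
  AddValuation.of w.v ((w.eq_top_iff 0).2 rfl) w.map_one w.add_ge w.map_mul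

theorem v_zero : w.v 0 = ⊤ := (w.eq_top_iff 0).2 rfl

theorem v_ne_top {x : K} (hx : x ≠ 0) : w.v x ≠ ⊤ := mt (w.eq_top_iff x).1 hx

theorem ne_zero_of_v_eq_coe {x : K} {m : ℤ} (h : w.v x = m) : x ≠ 0 := by
  rintro rfl
  simp [w.v_zero] at h

theorem v_pow (x : K) (n : ℕ) : w.v (x ^ n) = n • w.v x := w.toAddValuation.map_pow x n

theorem v_sub_comm (x y : K) : w.v (x - y) = w.v (y - x) := w.toAddValuation.map_sub_swap x y

theorem v_div_eq_zero {x y : K} (h : w.v x = w.v y) (hy : y ≠ 0) : w.v (x / y) = 0 := by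
  change w.toAddValuation (x / y) = 0
  rw [AddValuation.map_div]
  exact (LinearOrderedAddCommGroupWithTop.sub_eq_zero (w.v_ne_top hy)).2 h

theorem v_div_sub_one_add {x y : K} (hy : y ≠ 0) : w.v (x / y - 1) + w.v y = w.v (x - y) := by
  rw [← w.map_mul, sub_one_mul, div_mul_cancel₀ x hy]

theorem v_div_sub_one {x y : K} (hy : w.v y = 0) : w.v (x / y - 1) = w.v (x - y) := by
  simpa [hy] using w.v_div_sub_one_add (x := x) (w.ne_zero_of_v_eq_coe (m := 0) hy)

theorem coe_le_v_div_sub_one_iff {x y : K} (hy : w.v y = 1) (n : ℤ) :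
    (n : WithTop ℤ) ≤ w.v (x / y - 1) ↔ ((n + 1 : ℤ) : WithTop ℤ) ≤ w.v (x - y) := by
  rw [← w.v_div_sub_one_add (w.ne_zero_of_v_eq_coe (m := 1) hy), hy, WithTop.coe_add,
    WithTop.coe_one, WithTop.add_le_add_iff_right WithTop.one_ne_top]

theorem le_v_of_dvd {a b : w.integers} (h : a ∣ b) : w.v a ≤ w.v b := by
  obtain ⟨c, rfl⟩ := h
  simpa [w.map_mul] using le_add_of_nonneg_right c.2

theorem v_sum_le_of_distinct_v {ι : Type*} {s : Finset ι} (f : ι → K)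
    (hf : ∀ j ∈ s, ∀ k ∈ s, w.v (f j) = w.v (f k) → w.v (f j) ≠ ⊤ → j = k)
    {j : ι} (hj : j ∈ s) : w.v (∑ k ∈ s, f k) ≤ w.v (f j) := by
  classical
  obtain ⟨j₀, hj₀, hmin⟩ := s.exists_min_image (fun k => w.v (f k)) ⟨j, hj⟩
  refine le_trans (le_of_eq ?_) (hmin j hj)
  by_cases htop : w.v (f j₀) = ⊤
  · have hzero : ∀ k ∈ s, f k = 0 := fun k hk =>
      (w.eq_top_iff _).1 (top_le_iff.1 (htop ▸ hmin k hk))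
    rw [Finset.sum_eq_zero hzero, htop, w.v_zero]
  · rw [← Finset.add_sum_erase s f hj₀]
    refine w.toAddValuation.map_add_eq_of_lt_left (w.toAddValuation.map_lt_sum htop ?_)
    intro k hk
    exact lt_of_le_of_ne (hmin k (Finset.mem_of_mem_erase hk))
      fun h => Finset.ne_of_mem_erase hk (hf j₀ hj₀ k (Finset.mem_of_mem_erase hk) h htop).symm

end DValuation

open Module

def IsTotallyRamified {K L : Type*} [Field K] [Field L] [Algebra K L]
    (vK : DValuation K) (vL : DValuation L) : Prop :=
  ∀ x : K, vL.v (algebraMap K L x) = finrank K L • vK.v x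

section TotallyRamified

variable {K L : Type*} [Field K] [Field L] [Algebra K L] {vK : DValuation K} {vL : DValuation L}
  {α : L}

theorem v_smul_pow (hTR : IsTotallyRamified vK vL) (hα : vL.v α = 1) {a : K} {m : ℤ}
    (ha : vK.v a = m) (k : ℕ) :
    vL.v (a • α ^ k) = ((finrank K L * m + k : ℤ) : WithTop ℤ) := by
  rw [Algebra.smul_def, vL.map_mul, hTR, ha, vL.v_pow, hα]
  norm_cast
  simp

theorem v_sum_smul_pow_le (hTR : IsTotallyRamified vK vL) (hα : vL.v α = 1)
    (a : Fin (finrank K L) → K) (j : Fin (finrank K L)) :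
    vL.v (∑ k, a k • α ^ (k : ℕ)) ≤ vL.v (a j • α ^ (j : ℕ)) := by
  refine vL.v_sum_le_of_distinct_v _ (fun k _ l _ hkl hk => ?_) (Finset.mem_univ j)
  have hak : a k ≠ 0 := fun h => hk (by simp [h, vL.v_zero])
  have hal : a l ≠ 0 := fun h => hk (by simp [hkl, h, vL.v_zero])
  obtain ⟨m, hm⟩ := WithTop.ne_top_iff_exists.1 (vK.v_ne_top hak)
  obtain ⟨m', hm'⟩ := WithTop.ne_top_iff_exists.1 (vK.v_ne_top hal)
  rw [v_smul_pow hTR hα hm.symm, v_smul_pow hTR hα hm'.symm, WithTop.coe_inj] at hkl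
  have hmod := congrArg (· % (finrank K L : ℤ)) hkl
  simp only [Int.mul_add_emod_self_left] at hmod
  rw [Int.emod_eq_of_lt (by positivity) (by exact_mod_cast k.2),
    Int.emod_eq_of_lt (by positivity) (by exact_mod_cast l.2)] at hmod
  exact Fin.ext (by exact_mod_cast hmod)

theorem linearIndependent_pow_of_v_eq_one (hTR : IsTotallyRamified vK vL) (hα : vL.v α = 1) :
    LinearIndependent K fun k : Fin (finrank K L) => α ^ (k : ℕ) := by
  refine Fintype.linearIndependent_iff.2 fun a hsum k => ?_
  have hterm := v_sum_smul_pow_le hTR hα a k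
  rw [hsum, vL.v_zero, top_le_iff, vL.eq_top_iff, smul_eq_zero] at hterm
  exact hterm.resolve_right (pow_ne_zero _ (vL.ne_zero_of_v_eq_coe (m := 1) hα))

theorem exists_sum_smul_pow_eq [FiniteDimensional K L] (hTR : IsTotallyRamified vK vL)
    (hα : vL.v α = 1) (x : L) : ∃ a : Fin (finrank K L) → K, ∑ k, a k • α ^ (k : ℕ) = x := by
  have hspan := (linearIndependent_pow_of_v_eq_one hTR hα).span_eq_top_of_card_eq_finrank'
    (Fintype.card_fin _)
  exact (Submodule.mem_span_range_iff_exists_fun K).1 (hspan ▸ Submodule.mem_top)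

theorem v_algebraMap_nonneg_of_v_sum_smul_pow_nonneg (hTR : IsTotallyRamified vK vL)
    (hα : vL.v α = 1) {a : Fin (finrank K L) → K} (h : 0 ≤ vL.v (∑ k, a k • α ^ (k : ℕ)))
    (k : Fin (finrank K L)) : 0 ≤ vL.v (algebraMap K L (a k)) := by
  obtain hak | hak := eq_or_ne (a k) 0
  · simp [hak, vL.v_zero]
  obtain ⟨m, hm⟩ := WithTop.ne_top_iff_exists.1 (vK.v_ne_top hak)
  have hterm := WithTop.coe_le_coe.1 <|
    (v_smul_pow hTR hα hm.symm k) ▸ h.trans (v_sum_smul_pow_le hTR hα a k)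
  have hk : (k : ℤ) < finrank K L := by exact_mod_cast k.2
  have hm0 : 0 ≤ m := by nlinarith
  rw [hTR, ← hm]
  exact_mod_cast (by positivity : (0 : ℤ) ≤ finrank K L • m)

theorem v_sub_le_v_apply_sub_sum_smul_pow {F ι : Type*} [FunLike F L L] [AlgHomClass F K L L]
    [Fintype ι] (σ : F) (hα : 0 ≤ vL.v α) (hσα : 0 ≤ vL.v (σ α)) {a : ι → K}
    (ha : ∀ k, 0 ≤ vL.v (algebraMap K L (a k))) (e : ι → ℕ) :
    vL.v (σ α - α) ≤ vL.v (σ (∑ k, a k • α ^ e k) - ∑ k, a k • α ^ e k) := by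
  let y : vL.integers := ⟨σ α, hσα⟩
  let z : vL.integers := ⟨α, hα⟩
  let c : ι → vL.integers := fun k => ⟨algebraMap K L (a k), ha k⟩
  have hdvd : y - z ∣ ∑ k, c k * (y ^ e k - z ^ e k) :=
    Finset.dvd_sum fun k _ => (sub_dvd_pow_sub_pow _ _ _).mul_left _
  convert vL.le_v_of_dvd hdvd using 2
  · rfl
  · rw [map_sum, ← Finset.sum_sub_distrib]
    push_cast
    refine Finset.sum_congr rfl fun k _ => ?_
    simp [y, z, c, Algebra.smul_def, mul_sub, AlgHomClass.commutes]

theorem mem_gset_iff_le_v_sub [FiniteDimensional K L] (hTR : IsTotallyRamified vK vL)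
    (hα : vL.v α = 1) (σ : L ≃ₐ[K] L) (i : ℕ) :
    σ ∈ gset K vL i ↔ (((i : ℤ) + 1 : ℤ) : WithTop ℤ) ≤ vL.v (σ α - α) := by
  have hα0 : 0 ≤ vL.v α := hα ▸ zero_le_one
  refine ⟨fun hσ => hσ α hα0, fun h x hx => ?_⟩
  have hσα : 0 ≤ vL.v (σ α) := by
    have hi : (0 : WithTop ℤ) ≤ (((i : ℤ) + 1 : ℤ) : WithTop ℤ) := by exact_mod_cast by omega
    simpa using (le_min hα0 (hi.trans h)).trans (vL.add_ge α (σ α - α))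
  obtain ⟨a, rfl⟩ := exists_sum_smul_pow_eq hTR hα x
  exact h.trans <| v_sub_le_v_apply_sub_sum_smul_pow σ hα0 hσα
    (v_algebraMap_nonneg_of_v_sum_smul_pow_nonneg hTR hα hx) _

end TotallyRamified

section RamificationGroups

variable {K L : Type*} [Field K] [Field L] [Algebra K L] {vL : DValuation L} {σ : L ≃ₐ[K] L}
  {i : ℕ}

theorem v_apply_eq_of_mem_gset (hσ : σ ∈ gset K vL i) {x : L} (hx : 0 ≤ vL.v x)
    (hxi : vL.v x < (((i : ℤ) + 1 : ℤ) : WithTop ℤ)) : vL.v (σ x) = vL.v x :=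
  vL.toAddValuation.map_eq_of_lt_sub (hxi.trans_le (hσ x hx))

theorem le_v_apply_div_sub_one_of_mem_gset (hσ : σ ∈ gset K vL i) {u : L} (hu : vL.v u = 0) :
    (((i : ℤ) + 1 : ℤ) : WithTop ℤ) ≤ vL.v (σ u / u - 1) :=
  vL.v_div_sub_one hu ▸ hσ u hu.ge

theorem le_v_div_apply_sub_one_of_mem_gset (hσ : σ ∈ gset K vL i) {u : L} (hu : vL.v u = 0) :
    (((i : ℤ) + 1 : ℤ) : WithTop ℤ) ≤ vL.v (u / σ u - 1) := by
  have hσu := v_apply_eq_of_mem_gset hσ hu.ge (by rw [hu]; exact_mod_cast by omega)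
  rw [vL.v_div_sub_one (hσu.trans hu), vL.v_sub_comm]
  exact hσ u hu.ge

end RamificationGroups

/-- Congruences modulo `U_L^{i+1}` are written out explicitly: `u ≡ u' (mod U_L^{i+1})` means
`v_L (u/u' - 1) ≥ i + 1`. -/
theorem theta_injective_hom_independent_of_uniformizer_general
    (K L : Type*) [Field K] [Field L] [Algebra K L] [FiniteDimensional K L]
    (vK : DValuation K) (vL : DValuation L)
    (hTR : ∀ x : K, vL.v (algebraMap K L x) = (Module.finrank K L) • vK.v x)
    (α : L) (hα : vL.v α = 1)
    (i : ℕ) (hi : 1 ≤ i)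
    (htriv : gset K vL (i + 1) = {(1 : L ≃ₐ[K] L)}) :
    -- `θ_i` lands in `U_L^i/U_L^{i+1}`
    (∀ σ ∈ gset K vL i, ((i : ℤ) : WithTop ℤ) ≤ vL.v (σ α / α - 1)) ∧
    -- `θ_i` is a group homomorphism (modulo `U_L^{i+1}`)
    (∀ σ ∈ gset K vL i, ∀ τ ∈ gset K vL i,
      (((i : ℤ) + 1 : ℤ) : WithTop ℤ) ≤
        vL.v ((σ (τ α) / α) / ((σ α / α) * (τ α / α)) - 1)) ∧
    -- `θ_i` is injective (modulo `U_L^{i+1}`)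
    (∀ σ ∈ gset K vL i,
      (((i : ℤ) + 1 : ℤ) : WithTop ℤ) ≤ vL.v (σ α / α - 1) → σ = 1) ∧
    -- `θ_i` is independent of the uniformizer (modulo `U_L^{i+1}`)
    (∀ α' : L, vL.v α' = 1 → ∀ σ ∈ gset K vL i,
      (((i : ℤ) + 1 : ℤ) : WithTop ℤ) ≤ vL.v ((σ α / α) / (σ α' / α') - 1)) := by
  have hα0 : α ≠ 0 := vL.ne_zero_of_v_eq_coe (m := 1) hα
  have hquot : ∀ β : L, vL.v β = 1 → vL.v (β / α) = 0 := fun β hβ =>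
    vL.v_div_eq_zero (hβ.trans hα.symm) hα0
  refine ⟨fun σ hσ => ?_, fun σ hσ τ hτ => ?_, fun σ hσ hθ => ?_, fun α' hα' σ hσ => ?_⟩
  · exact (vL.coe_le_v_div_sub_one_iff hα i).2 (hσ α (hα ▸ zero_le_one))
  · have hτα : vL.v (τ α) = 1 := (v_apply_eq_of_mem_gset hτ (hα ▸ zero_le_one)
      (by rw [hα]; exact_mod_cast by omega)).trans hα
    convert le_v_apply_div_sub_one_of_mem_gset hσ (hquot _ hτα) using 3
    have hτα0 : τ α ≠ 0 := (map_ne_zero τ).2 hα0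
    have hσα0 : σ α ≠ 0 := (map_ne_zero σ).2 hα0
    rw [map_div₀]
    field_simp
  · have h := (vL.coe_le_v_div_sub_one_iff hα _).1 hθ
    rw [← Set.mem_singleton_iff, ← htriv, mem_gset_iff_le_v_sub hTR hα]
    exact_mod_cast h
  · convert le_v_div_apply_sub_one_of_mem_gset hσ (hquot α' hα') using 3
    have hσα0 : σ α ≠ 0 := (map_ne_zero σ).2 hα0
    have hσα'0 : σ α' ≠ 0 := (map_ne_zero σ).2 (vL.ne_zero_of_v_eq_coe (m := 1) hα')
    rw [map_div₀]
    field_simp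

/-- Proposition: for the last ramification jump `i`, the map
`θ_i : G_i → U_L^i/U_L^{i+1}`, `σ ↦ σ(α)/α`, is an injective group homomorphism
independent of the choice of the uniformizer `α`.  Congruences modulo
`U_L^{i+1}` are written out explicitly:  `u ≡ u' (mod U_L^{i+1})` means
`v_L (u/u' - 1) ≥ i + 1`. -/
theorem theta_injective_hom_independent_of_uniformizer
    (K L : Type*) [Field K] [Field L] [Algebra K L] [FiniteDimensional K L]
    [IsGalois K L]
    (vK : DValuation K) (vL : DValuation L)
    (hKc : vK.IsComplete) (hLc : vL.IsComplete)
    (hTR : ∀ x : K, vL.v (algebraMap K L x) = (Module.finrank K L) • vK.v x)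
    (p : ℕ) (hp : p.Prime) (hres : 0 < vK.v (p : K))
    (α : L) (hα : vL.v α = 1)
    (i : ℕ) (hi : 1 ≤ i)
    (hne : gset K vL i ≠ {(1 : L ≃ₐ[K] L)})
    (htriv : gset K vL (i + 1) = {(1 : L ≃ₐ[K] L)}) :
    -- `θ_i` lands in `U_L^i/U_L^{i+1}`
    (∀ σ ∈ gset K vL i, ((i : ℤ) : WithTop ℤ) ≤ vL.v (σ α / α - 1)) ∧
    -- `θ_i` is a group homomorphism (modulo `U_L^{i+1}`)
    (∀ σ ∈ gset K vL i, ∀ τ ∈ gset K vL i,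
      (((i : ℤ) + 1 : ℤ) : WithTop ℤ) ≤
        vL.v ((σ (τ α) / α) / ((σ α / α) * (τ α / α)) - 1)) ∧
    -- `θ_i` is injective (modulo `U_L^{i+1}`)
    (∀ σ ∈ gset K vL i,
      (((i : ℤ) + 1 : ℤ) : WithTop ℤ) ≤ vL.v (σ α / α - 1) → σ = 1) ∧
    -- `θ_i` is independent of the uniformizer (modulo `U_L^{i+1}`)
    (∀ α' : L, vL.v α' = 1 → ∀ σ ∈ gset K vL i,
      (((i : ℤ) + 1 : ℤ) : WithTop ℤ) ≤ vL.v ((σ α / α) / (σ α' / α') - 1)) :=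
  theta_injective_hom_independent_of_uniformizer_general K L vK vL hTR α hα i hi htriv
end
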